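/- Let p ≥ 1 and J ≥ 2, and let M be a Jp × Jp matrix over F_2 partitioned into a J×J array of blocks, where each block is some p×p circulant permutation matrix P_p^{k_{i,j}} (k_{i,j} ∈ ℤ/p arbitrary). Then M is singular, i.e., det M = 0. Consequently, no parity-check matrix over F_2 composed of J ≥ 2 block rows of circulant permutation matrices defines an MDS array code with sub-packetization p: there exist no binary block MDS CPM-QC LDPC codes with J ≥ 2 parity block rows. -/
import Mathlib


/-- The `p × p` circulant permutation matrix `P_p ^ k` over `F`: its `(a, b)` entry is
`1` exactly when `b ≡ a + k (mod p)`. -/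
def cpm (F : Type*) [Zero F] [One F] (p k : ℕ) : Matrix (Fin p) (Fin p) F :=
  Matrix.of fun a b => if ((b : ℕ) : ZMod p) = ((a : ℕ) : ZMod p) + (k : ZMod p) then 1 else 0

lemma cpm_col_sum (p k : ℕ) (hp : 1 ≤ p) (b : Fin p) :
    ∑ a : Fin p, cpm (ZMod 2) p k a b = 1 := by
  haveI : NeZero p := ⟨by omega⟩
  set c : ZMod p := ((b : ℕ) : ZMod p) - (k : ZMod p) with hc
  have key : ∀ a : Fin p,
      (((b : ℕ) : ZMod p) = ((a : ℕ) : ZMod p) + (k : ZMod p)) ↔ ((a : ℕ) : ZMod p) = c := by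
    intro a
    rw [hc, eq_sub_iff_add_eq, eq_comm]
  let a0 : Fin p := ⟨c.val, ZMod.val_lt c⟩
  have ha0 : ((a0 : ℕ) : ZMod p) = c := ZMod.natCast_rightInverse c
  simp only [cpm, Matrix.of_apply, key]
  rw [Finset.sum_eq_single a0]
  · simp [ha0]
  · intro a _ hne
    rw [if_neg]
    intro h
    apply hne
    have : ((a : ℕ) : ZMod p).val = ((a0 : ℕ) : ZMod p).val := by rw [h, ha0]
    rw [ZMod.val_natCast_of_lt a.isLt, ZMod.val_natCast_of_lt a0.isLt] at this
    exact Fin.ext this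
  · intro h; exact absurd (Finset.mem_univ a0) h

lemma block_det_zero (p J : ℕ) (hp : 1 ≤ p) (hJ : 2 ≤ J) (k : Fin J → Fin J → ℕ) :
    (Matrix.of fun a b : Fin J × Fin p =>
      cpm (ZMod 2) p (k a.1 b.1) a.2 b.2).det = 0 := by
  rw [← Matrix.exists_vecMul_eq_zero_iff]
  set i0 : Fin J := ⟨0, by omega⟩
  set i1 : Fin J := ⟨1, by omega⟩
  have hne : i0 ≠ i1 := by simp [i0, i1, Fin.ext_iff]
  refine ⟨fun x => if x.1 = i0 ∨ x.1 = i1 then 1 else 0, ?_, ?_⟩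
  · intro h
    have := congrFun h (i0, ⟨0, by omega⟩)
    simp at this
  · funext b
    simp only [Matrix.vecMul, dotProduct, Fintype.sum_prod_type, Pi.zero_apply]
    have key : ∀ i : Fin J, ∑ a : Fin p,
        (if (i, a).1 = i0 ∨ (i, a).1 = i1 then (1 : ZMod 2) else 0) *
          (Matrix.of fun a b : Fin J × Fin p =>
            cpm (ZMod 2) p (k a.1 b.1) a.2 b.2) (i, a) b =
        (if i = i0 then 1 else 0) + (if i = i1 then 1 else 0) := by
      intro i
      by_cases h0 : i = i0
      · subst h0
        simp only [Matrix.of_apply, true_or, if_true, one_mul, if_neg hne]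
        rw [cpm_col_sum p _ hp b.2, add_zero]
      · by_cases h1 : i = i1
        · subst h1
          simp only [Matrix.of_apply, or_true, if_true, one_mul, if_neg h0]
          rw [cpm_col_sum p _ hp b.2, zero_add]
        · simp [h0, h1]
    rw [Finset.sum_congr rfl fun i _ => key i, Finset.sum_add_distrib]
    simp only [Finset.sum_ite_eq', Finset.mem_univ, if_true]
    decide

/-- **Non-existence of binary block MDS CPM-QC LDPC codes.**  Any `Jp × Jp` matrix over
`F₂` (`J ≥ 2`) partitioned into a `J × J` array of circulant permutation matrix blocks
`P_p ^ k(i,j)` is singular.  Consequently, no binary parity-check matrix with `J ≥ 2`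
block rows of circulant permutation matrices can define an MDS array code with
sub-packetization `p`: some `J`-element set of block columns yields a singular square
block matrix. -/
theorem no_binary_block_mds_cpm_qc
    (p J : ℕ) (hp : 1 ≤ p) (hJ : 2 ≤ J) (k : Fin J → Fin J → ℕ) :
    (Matrix.of fun a b : Fin J × Fin p =>
      cpm (ZMod 2) p (k a.1 b.1) a.2 b.2).det = 0 ∧
    ∀ n : ℕ, J ≤ n → ∀ k' : Fin J → Fin n → ℕ,
      ¬ (∀ t : Fin J → Fin n, Function.Injective t →
          (Matrix.of fun a b : Fin J × Fin p =>
            cpm (ZMod 2) p (k' a.1 (t b.1)) a.2 b.2).det ≠ 0) := by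
  refine ⟨block_det_zero p J hp hJ k, ?_⟩
  intro n hn k' h
  exact h (Fin.castLE hn) (Fin.castLE_injective hn)
    (block_det_zero p J hp hJ fun i j => k' i (Fin.castLE hn j))
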